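/- Let d ≥ 2 be an integer, L ∈ ℕ, u ∈ H_{d,L}, and N ∈ ℕ₀. Then ‖u‖_{L^1(I_L^{d−1} × {N})} ≤ ‖u‖_{L^1(I_L^{d−1} × {0})} and ‖u‖_{L^∞(I_L^{d−1} × {N})} ≤ ‖u‖_{L^∞(I_L^{d−1} × {0})}; i.e. discrete harmonic extension to the half space is a contraction from the bottom layer to any higher layer in both L^1 and L^∞. -/

import Mathlib

/-!
The harmonic equation and the triangle inequality give
`2d |u(x, y+1)| ≤ Σ_{neighbours z} |u(z)|`. Summing over a period cell, which is invariant under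
horizontal translations by periodicity, or evaluating at a maximiser on the period cell, turns the
`2(d-1)` horizontal neighbours into `2(d-1)` copies of the layer norm at height `y + 1`; hence both
layer norms are convex in the height. A bounded convex sequence is nonincreasing.
-/

/-- The cube `I_L^m = {-L+1,…,L}^m` of lattice points. -/
noncomputable def ILpi (m L : ℕ) : Finset (Fin m → ℤ) :=
  Finset.Icc (fun _ => -(L:ℤ) + 1) (fun _ => (L:ℤ))

/-- `u` belongs to `H_{d,L,≥0}`: bounded, `2L`-periodic in the first `d-1`
coordinates, and discrete harmonic at every point of `ℤ^{d-1} × ℕ`. -/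
def HalfHarm (d L : ℕ) (u : (Fin (d-1) → ℤ) → ℕ → ℝ) : Prop :=
  (∃ B : ℝ, ∀ x y, |u x y| ≤ B) ∧
  (∀ x y i, u (x + (2*L) • Pi.single i 1) y = u x y) ∧
  (∀ x y, (∑ i, (u (x + Pi.single i 1) (y+1) + u (x - Pi.single i 1) (y+1)))
      + u x (y+2) + u x y = 2 * d * u x (y+1))

open Finset Function

theorem antitone_of_bddAbove_of_two_mul_le {α : Type*} [Field α] [LinearOrder α]
    [IsStrictOrderedRing α] [Archimedean α] {a : ℕ → α} (hb : BddAbove (Set.range a))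
    (hc : ∀ n, 2 * a (n + 1) ≤ a (n + 2) + a n) : Antitone a := by
  obtain ⟨C, hC⟩ := hb
  have hgap : Monotone fun n => a (n + 1) - a n :=
    monotone_nat_of_le_succ fun n => by linarith [hc n]
  refine antitone_nat_of_succ_le fun n => ?_
  by_contra! hn
  have hgrowth : ∀ k : ℕ, a n + k * (a (n + 1) - a n) ≤ a (n + k) := by
    intro k
    induction k with
    | zero => simp
    | succ k ih =>
      have := hgap (Nat.le_add_right n k)
      push_cast
      rw [← add_assoc]
      dsimp only at this
      linarith
  obtain ⟨k, hk⟩ := exists_nat_gt ((C - a n) / (a (n + 1) - a n))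
  rw [div_lt_iff₀ (sub_pos.2 hn)] at hk
  linarith [hgrowth k, hC ⟨n + k, rfl⟩]

theorem Finset.biSup_eq_sup'_of_nonneg {ι : Type*} {s : Finset ι} (hs : s.Nonempty) {f : ι → ℝ}
    (hf : ∀ i ∈ s, 0 ≤ f i) : ⨆ i ∈ s, f i = s.sup' hs f := by
  obtain ⟨j, hj, hmax⟩ := s.exists_mem_eq_sup' hs f
  have hmax_nonneg : 0 ≤ s.sup' hs f := hmax ▸ hf j hj
  refine le_antisymm (Real.iSup_le (fun i => Real.iSup_le (fun hi => le_sup' f hi) hmax_nonneg)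
    hmax_nonneg) ?_
  rw [hmax]
  refine le_ciSup₂ (f := fun i (_ : i ∈ s) => f i) ⟨s.sup' hs f, ?_⟩ j hj
  rintro _ ⟨_, ⟨i, rfl⟩, ⟨hi, rfl⟩⟩
  exact le_sup' f hi

section PeriodicCube

variable {m L : ℕ}

theorem mem_ILpi_iff {x : Fin m → ℤ} :
    x ∈ ILpi m L ↔ ∀ j, x j ∈ Set.Ico (-(L : ℤ) + 1) (-(L : ℤ) + 1 + 2 * L) := by
  simp only [ILpi, mem_Icc, Pi.le_def, Set.mem_Ico, ← forall_and]
  exact forall_congr' fun j => by omega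

noncomputable def cubeRep (hL : 0 < L) (x : Fin m → ℤ) : Fin m → ℤ :=
  fun j => toIcoMod (by positivity : (0 : ℤ) < 2 * L) (-L + 1) (x j)

theorem cubeRep_mem (hL : 0 < L) (x : Fin m → ℤ) : cubeRep hL x ∈ ILpi m L :=
  mem_ILpi_iff.2 fun _ => toIcoMod_mem_Ico _ _ _

theorem ILpi_nonempty (hL : 0 < L) : (ILpi m L).Nonempty :=
  ⟨_, cubeRep_mem hL 0⟩

theorem cubeRep_of_mem (hL : 0 < L) {x : Fin m → ℤ} (hx : x ∈ ILpi m L) : cubeRep hL x = x :=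
  funext fun j => (toIcoMod_eq_self _).2 (mem_ILpi_iff.1 hx j)

theorem cubeRep_cubeRep_add (hL : 0 < L) (x v : Fin m → ℤ) :
    cubeRep hL (cubeRep hL x + v) = cubeRep hL (x + v) := by
  funext j
  simp only [cubeRep, Pi.add_apply]
  rw [← self_sub_toIcoDiv_zsmul _ _ (x j), sub_add_eq_add_sub, toIcoMod_sub_zsmul]

variable {β : Type*} {f : (Fin m → ℤ) → β}

theorem periodic_smul_of_periodic_single {q : ℕ} (hf : ∀ i, Periodic f (q • Pi.single i 1))
    (w : Fin m → ℤ) : Periodic f ((q : ℤ) • w) := by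
  have hw : (q : ℤ) • w = ∑ i, w i • (q • Pi.single i 1) := by
    ext j
    simp [Finset.sum_apply, Pi.single_apply, mul_comm]
  rw [hw]
  exact Finset.sum_induction _ (Periodic f) (fun _ _ => Periodic.add_period)
    (periodic_with_period_zero f) fun i _ => (hf i).zsmul (w i)

theorem apply_cubeRep (hL : 0 < L) (hf : ∀ i, Periodic f ((2 * L) • Pi.single i 1))
    (x : Fin m → ℤ) : f (cubeRep hL x) = f x := by
  have hx : cubeRep hL x = x - ((2 * L : ℕ) : ℤ) •
      fun j => toIcoDiv (by positivity : (0 : ℤ) < 2 * L) (-L + 1) (x j) := by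
    funext j
    simp only [cubeRep, ← self_sub_toIcoDiv_zsmul, Pi.sub_apply, Pi.smul_apply, smul_eq_mul]
    push_cast
    ring
  rw [hx]
  exact (periodic_smul_of_periodic_single hf _).sub_eq x

theorem sum_ILpi_add [AddCommMonoid β] (hL : 0 < L)
    (hf : ∀ i, Periodic f ((2 * L) • Pi.single i 1)) (v : Fin m → ℤ) :
    ∑ x ∈ ILpi m L, f (x + v) = ∑ x ∈ ILpi m L, f x := by
  refine sum_nbij' (fun x => cubeRep hL (x + v)) (fun x => cubeRep hL (x + -v))
    (fun x _ => cubeRep_mem hL _) (fun x _ => cubeRep_mem hL _) (fun x hx => ?_)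
    (fun x hx => ?_) (fun x _ => (apply_cubeRep hL hf _).symm)
  · simp only [cubeRep_cubeRep_add, add_neg_cancel_right, cubeRep_of_mem hL hx]
  · simp only [cubeRep_cubeRep_add, neg_add_cancel_right, cubeRep_of_mem hL hx]

theorem le_sup'_ILpi [SemilatticeSup β] (hL : 0 < L)
    (hf : ∀ i, Periodic f ((2 * L) • Pi.single i 1)) (x : Fin m → ℤ) :
    f x ≤ (ILpi m L).sup' (ILpi_nonempty hL) f :=
  apply_cubeRep hL hf x ▸ le_sup' f (cubeRep_mem hL x)

end PeriodicCube

section Layers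

variable {m L : ℕ} {u : (Fin m → ℤ) → ℕ → ℝ}

theorem mul_abs_le_sum_abs_neighbours {x : Fin m → ℤ} {y : ℕ}
    (hharm : (∑ i, (u (x + Pi.single i 1) (y + 1) + u (x - Pi.single i 1) (y + 1)))
      + u x (y + 2) + u x y = 2 * (m + 1) * u x (y + 1)) :
    2 * (m + 1) * |u x (y + 1)| ≤
      (∑ i, (|u (x + Pi.single i 1) (y + 1)| + |u (x - Pi.single i 1) (y + 1)|))
        + |u x (y + 2)| + |u x y| := by
  calc 2 * (m + 1) * |u x (y + 1)| = |2 * (m + 1) * u x (y + 1)| := by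
        rw [abs_mul, abs_of_pos (by positivity : (0 : ℝ) < 2 * (m + 1))]
    _ ≤ |∑ i, (u (x + Pi.single i 1) (y + 1) + u (x - Pi.single i 1) (y + 1))|
        + |u x (y + 2)| + |u x y| := hharm ▸ abs_add_three _ _ _
    _ ≤ _ := by
      gcongr
      exact (abs_sum_le_sum_abs _ _).trans (sum_le_sum fun i _ => abs_add_le _ _)

theorem two_mul_sum_abs_succ_le (hL : 0 < L)
    (hper : ∀ y i, Periodic (u · y) ((2 * L) • Pi.single i 1))
    (hharm : ∀ x y, (∑ i, (u (x + Pi.single i 1) (y + 1) + u (x - Pi.single i 1) (y + 1)))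
      + u x (y + 2) + u x y = 2 * (m + 1) * u x (y + 1)) (y : ℕ) :
    2 * ∑ x ∈ ILpi m L, |u x (y + 1)| ≤
      ∑ x ∈ ILpi m L, |u x (y + 2)| + ∑ x ∈ ILpi m L, |u x y| := by
  set T := fun y => ∑ x ∈ ILpi m L, |u x y|
  have htranslate : ∀ v, ∑ x ∈ ILpi m L, |u (x + v) (y + 1)| = T (y + 1) :=
    sum_ILpi_add hL fun i => (hper (y + 1) i).comp abs
  have hneighbours : ∑ x ∈ ILpi m L, ∑ i,
      (|u (x + Pi.single i 1) (y + 1)| + |u (x - Pi.single i 1) (y + 1)|) = 2 * m * T (y + 1) := by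
    rw [sum_comm]
    simp only [sum_add_distrib, sub_eq_add_neg, htranslate, sum_const, card_univ,
      Fintype.card_fin, nsmul_eq_mul]
    ring
  have key : 2 * (m + 1) * T (y + 1) ≤ 2 * m * T (y + 1) + T (y + 2) + T y :=
    calc 2 * (m + 1) * T (y + 1) = ∑ x ∈ ILpi m L, 2 * (m + 1) * |u x (y + 1)| := mul_sum _ _ _
      _ ≤ ∑ x ∈ ILpi m L, ((∑ i, (|u (x + Pi.single i 1) (y + 1)|
            + |u (x - Pi.single i 1) (y + 1)|)) + |u x (y + 2)| + |u x y|) :=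
        sum_le_sum fun x _ => mul_abs_le_sum_abs_neighbours (hharm x y)
      _ = 2 * m * T (y + 1) + T (y + 2) + T y := by
        rw [sum_add_distrib, sum_add_distrib, hneighbours]
  linarith

theorem two_mul_sup'_abs_succ_le (hL : 0 < L)
    (hper : ∀ y i, Periodic (u · y) ((2 * L) • Pi.single i 1))
    (hharm : ∀ x y, (∑ i, (u (x + Pi.single i 1) (y + 1) + u (x - Pi.single i 1) (y + 1)))
      + u x (y + 2) + u x y = 2 * (m + 1) * u x (y + 1)) (y : ℕ) :
    2 * (ILpi m L).sup' (ILpi_nonempty hL) (fun x => |u x (y + 1)|) ≤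
      (ILpi m L).sup' (ILpi_nonempty hL) (fun x => |u x (y + 2)|) +
        (ILpi m L).sup' (ILpi_nonempty hL) fun x => |u x y| := by
  set S := fun y => (ILpi m L).sup' (ILpi_nonempty hL) fun x => |u x y|
  have hle : ∀ z y, |u z y| ≤ S y := fun z y => le_sup'_ILpi hL (fun i => (hper y i).comp abs) z
  obtain ⟨x, -, hx⟩ := exists_mem_eq_sup' (ILpi_nonempty hL) fun x => |u x (y + 1)|
  have key : 2 * (m + 1) * S (y + 1) ≤ 2 * m * S (y + 1) + S (y + 2) + S y :=
    calc 2 * (m + 1) * S (y + 1) = 2 * (m + 1) * |u x (y + 1)| := by rw [← hx]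
      _ ≤ (∑ i, (|u (x + Pi.single i 1) (y + 1)| + |u (x - Pi.single i 1) (y + 1)|))
            + |u x (y + 2)| + |u x y| := mul_abs_le_sum_abs_neighbours (hharm x y)
      _ ≤ (∑ _i : Fin m, (S (y + 1) + S (y + 1))) + S (y + 2) + S y := by
        gcongr <;> apply hle
      _ = 2 * m * S (y + 1) + S (y + 2) + S y := by
        simp only [sum_const, card_univ, Fintype.card_fin, nsmul_eq_mul]
        ring
  linarith

end Layers

/-- Discrete harmonic extension to the half space contracts the `L^1` norm and
the `L^∞` norm from the bottom layer to any layer `N`. -/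
theorem halfspace_L1_Linfty_contraction
    (d L : ℕ) (hd : 2 ≤ d) (hL : 1 ≤ L)
    (u : (Fin (d-1) → ℤ) → ℕ → ℝ) (hu : HalfHarm d L u) (N : ℕ) :
    (∑ x ∈ ILpi (d-1) L, |u x N|) ≤ (∑ x ∈ ILpi (d-1) L, |u x 0|) ∧
    (⨆ x ∈ ILpi (d-1) L, |u x N|) ≤ (⨆ x ∈ ILpi (d-1) L, |u x 0|) := by
  obtain ⟨⟨B, hB⟩, hper, hharm⟩ := hu
  have hd' : (d : ℝ) = ((d - 1 : ℕ) : ℝ) + 1 := by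
    rw [Nat.cast_sub (by omega), Nat.cast_one, sub_add_cancel]
  simp only [hd'] at hharm
  have hsum : Antitone fun y => ∑ x ∈ ILpi (d - 1) L, |u x y| := by
    refine antitone_of_bddAbove_of_two_mul_le ⟨#(ILpi (d - 1) L) * B, ?_⟩
      (two_mul_sum_abs_succ_le hL (fun y i x => hper x y i) hharm)
    rintro _ ⟨y, rfl⟩
    simpa using sum_le_sum fun x (_ : x ∈ ILpi (d - 1) L) => hB x y
  have hsup : Antitone fun y => (ILpi (d - 1) L).sup' (ILpi_nonempty hL) fun x => |u x y| := by
    refine antitone_of_bddAbove_of_two_mul_le ⟨B, ?_⟩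
      (two_mul_sup'_abs_succ_le hL (fun y i x => hper x y i) hharm)
    rintro _ ⟨y, rfl⟩
    exact sup'_le _ _ fun x _ => hB x y
  refine ⟨hsum (Nat.zero_le N), ?_⟩
  simp only [biSup_eq_sup'_of_nonneg (ILpi_nonempty hL) fun _ _ => abs_nonneg _]
  exact hsup (Nat.zero_le N)
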